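/- Let φ : U → V be a diffeomorphism between open subsets of the closed half-space ℍ^k. Then φ maps boundary points to boundary points: φ(U ∩ ∂ℍ^k) ⊆ ∂ℍ^k. -/

import Mathlib

/-- A diffeomorphism between open subsets of the half-space
`ℍ^k = {x : x_k ≥ 0}` maps boundary points to boundary points. -/
theorem stmt_9 (n : ℕ) (U V U₀ V₀ : Set (Fin (n + 1) → ℝ))
    (hU₀ : IsOpen U₀) (hV₀ : IsOpen V₀)
    (hU : U = U₀ ∩ {x | 0 ≤ x (Fin.last n)})
    (hV : V = V₀ ∩ {x | 0 ≤ x (Fin.last n)})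
    (φ ψ : (Fin (n + 1) → ℝ) → (Fin (n + 1) → ℝ))
    (hφ : ContDiffOn ℝ (⊤ : ℕ∞) φ U) (hψ : ContDiffOn ℝ (⊤ : ℕ∞) ψ V)
    (hmap : Set.MapsTo φ U V) (hmap' : Set.MapsTo ψ V U)
    (hinv : ∀ x ∈ U, ψ (φ x) = x) (hinv' : ∀ y ∈ V, φ (ψ y) = y) :
    ∀ x ∈ U, x (Fin.last n) = 0 → (φ x) (Fin.last n) = 0 := by
  intro x hxU hx0
  by_contra hne
  set y₀ := φ x with hy₀
  have hy₀V : y₀ ∈ V := hmap hxU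
  have hy₀pos : 0 < y₀ (Fin.last n) := lt_of_le_of_ne (hV ▸ hy₀V).2 (Ne.symm hne)
  -- W : open neighborhood of y₀ inside V
  set W := V₀ ∩ {z : Fin (n+1) → ℝ | 0 < z (Fin.last n)} with hWdef
  have hWopen : IsOpen W := hV₀.inter (isOpen_lt continuous_const (continuous_apply _))
  have hy₀W : y₀ ∈ W := ⟨(hV ▸ hy₀V).1, hy₀pos⟩
  have hWV : W ⊆ V := by
    intro z hz
    rw [hV]
    refine ⟨hz.1, ?_⟩
    show (0:ℝ) ≤ z (Fin.last n)
    exact le_of_lt hz.2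
  have hWnhds : W ∈ nhds y₀ := hWopen.mem_nhds hy₀W
  -- derivatives
  have hψdiff : DifferentiableOn ℝ ψ V := hψ.differentiableOn (by simp)
  have hψy₀ : DifferentiableAt ℝ ψ y₀ :=
    ((hψdiff y₀ hy₀V).mono hWV).differentiableAt hWnhds
  have hφdiff : DifferentiableOn ℝ φ U := hφ.differentiableOn (by simp)
  have hψy₀x : ψ y₀ = x := hinv x hxU
  have hφx : DifferentiableWithinAt ℝ φ U x := hφdiff x hxU
  set B := fderiv ℝ ψ y₀ with hB
  set A := fderivWithin ℝ φ U x with hA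
  have hcomp : HasFDerivAt (φ ∘ ψ) (A.comp B) y₀ := by
    have h1 : HasFDerivWithinAt φ A U (ψ y₀) := by
      rw [hψy₀x]; exact hφx.hasFDerivWithinAt
    have h2 : HasFDerivWithinAt (φ ∘ ψ) (A.comp B) W y₀ :=
      h1.comp y₀ hψy₀.hasFDerivAt.hasFDerivWithinAt fun z hz => hmap' (hWV hz)
    exact h2.hasFDerivAt hWnhds
  have hid : HasFDerivAt (φ ∘ ψ) (ContinuousLinearMap.id ℝ _) y₀ := by
    have : (φ ∘ ψ) =ᶠ[nhds y₀] id := by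
      filter_upwards [hWnhds] with z hz
      exact hinv' z (hWV hz)
    exact (hasFDerivAt_id y₀).congr_of_eventuallyEq this
  have hAB : A.comp B = ContinuousLinearMap.id ℝ _ := hcomp.unique hid
  -- B is bijective
  have hBinj : Function.Injective B := by
    intro a b hab
    have := congrArg A hab
    have ha : A (B a) = a := by
      have := congrFun (congrArg (fun (f : _ →L[ℝ] _) => (f : (Fin (n+1) → ℝ) → _)) hAB) a
      simpa using this
    have hb : A (B b) = b := by
      have := congrFun (congrArg (fun (f : _ →L[ℝ] _) => (f : (Fin (n+1) → ℝ) → _)) hAB) b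
      simpa using this
    rw [ha, hb] at this; exact this
  have hBbij : Function.Bijective B :=
    ⟨hBinj, (LinearMap.injective_iff_surjective (f := (B : (Fin (n+1) → ℝ) →ₗ[ℝ] _))).mp hBinj⟩
  let Beq : (Fin (n+1) → ℝ) ≃L[ℝ] (Fin (n+1) → ℝ) :=
    (LinearEquiv.ofBijective (B : (Fin (n+1) → ℝ) →ₗ[ℝ] _) hBbij).toContinuousLinearEquiv
  have hBeq : (Beq : (Fin (n+1) → ℝ) →L[ℝ] _) = B := by
    ext z; rfl
  -- strict derivative
  have hψstrict : HasStrictFDerivAt ψ (Beq : (Fin (n+1) → ℝ) →L[ℝ] _) y₀ := by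
    rw [hBeq]
    exact ((hψ.mono hWV).contDiffAt hWnhds).hasStrictFDerivAt (by simp)
  have hmapnhds : Filter.map ψ (nhds y₀) = nhds (ψ y₀) := hψstrict.map_nhds_eq_of_equiv
  -- U ∈ nhds x
  have hUnhds : U ∈ nhds x := by
    rw [← hψy₀x, ← hmapnhds]
    exact Filter.mem_map.mpr (Filter.mem_of_superset hWnhds fun z hz => hmap' (hWV hz))
  -- contradiction: point with negative last coordinate near x
  obtain ⟨ε, hε, hball⟩ := Metric.mem_nhds_iff.mp hUnhds
  set y : Fin (n+1) → ℝ := Function.update x (Fin.last n) (-(ε/2)) with hy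
  have hyU : y ∈ U := by
    apply hball
    rw [Metric.mem_ball, dist_eq_norm]
    have : y - x = Function.update (0 : Fin (n+1) → ℝ) (Fin.last n) (-(ε/2)) := by
      funext i
      by_cases h : i = Fin.last n
      · subst h; simp [hy, hx0]
      · simp [hy, Function.update_of_ne h]
    rw [this]
    have : ‖Function.update (0 : Fin (n+1) → ℝ) (Fin.last n) (-(ε/2))‖ = ε/2 := by
      rw [show Function.update (0 : Fin (n+1) → ℝ) (Fin.last n) (-(ε/2)) = Pi.single (Fin.last n) (-(ε/2)) from rfl]
      rw [Pi.norm_single]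
      simp [abs_of_pos hε]
    rw [this]; linarith
  have : 0 ≤ y (Fin.last n) := (hU ▸ hyU).2
  simp [hy] at this
  linarith
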